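/- Let x_1 < x_2 < ... < x_m be real numbers with targets y_1, ..., y_m ∈ ℝ, let b_1 ≤ b_2 ≤ ... ≤ b_n (with convention b_{n+1} = +∞) and c_1, ..., c_n ∈ ℝ, and let f(x) = Σ_{i=1}^n c_i·max(x − b_i, 0). Suppose both families of stationarity conditions hold: for every 1 ≤ j ≤ n, Σ_{k=1}^m 𝟙[x_k > b_j]·(f(x_k) − y_k) = 0 and Σ_{k=1}^m max(x_k − b_j, 0)·(f(x_k) − y_k) = 0. Then for every 1 ≤ k ≤ n with u_k ≥ 2, Σ_{i=1}^k c_i = ((1/u_k)·Σ_{j ∈ U_k} x_j·y_j − μ_k·ȳ_k)/σ_k², i.e., the slope of the network on the cell (b_k, b_{k+1}] equals the least-squares slope of the data in that cell. -/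

import Mathlib

open scoped Classical

open Finset

/-! On the cell `(b k, b (k+1)]` the network is affine with slope `S = ∑_{i ≤ k} c i`. The
stationarity conditions say that the residuals `f (x j) - y j`, plain and weighted by `x j`, sum
to zero over every half-line `b i < x`, hence over the cell, the difference of two consecutive
half-lines. These are the normal equations of the least-squares line through the data in the
cell, so `S` is its slope; the variance is positive because the cell holds two distinct points. -/

section LeastSquares

variable {ι : Type*} (s : Finset ι) (x y : ι → ℝ)

theorem sum_sq_div_card_sub_sq_eq (hs : s.Nonempty) :
    (∑ j ∈ s, x j ^ 2) / #s - ((∑ j ∈ s, x j) / #s) ^ 2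
      = (∑ j ∈ s, (x j - (∑ j ∈ s, x j) / #s) ^ 2) / #s := by
  have hN : (#s : ℝ) ≠ 0 := by exact_mod_cast hs.card_pos.ne'
  simp only [sub_sq, sum_add_distrib, sum_sub_distrib, ← sum_mul, ← mul_sum, sum_const,
    nsmul_eq_mul]
  field_simp
  ring

theorem sum_sq_div_card_sub_sq_pos (hs : 2 ≤ #s) (hx : Set.InjOn x s) :
    0 < (∑ j ∈ s, x j ^ 2) / #s - ((∑ j ∈ s, x j) / #s) ^ 2 := by
  obtain ⟨j₁, hj₁, j₂, hj₂, hne⟩ := one_lt_card.mp hs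
  rw [sum_sq_div_card_sub_sq_eq s x ⟨j₁, hj₁⟩]
  set μ := (∑ j ∈ s, x j) / #s
  have hfar : x j₁ ≠ μ ∨ x j₂ ≠ μ := by
    by_contra! h
    exact hne (hx hj₁ hj₂ (h.1.trans h.2.symm))
  refine div_pos (sum_pos' (fun j _ => sq_nonneg _) ?_) (by positivity)
  rcases hfar with h | h
  · exact ⟨j₁, hj₁, by positivity⟩
  · exact ⟨j₂, hj₂, by positivity⟩

theorem slope_eq_of_normal_equations (a β : ℝ)
    (h₀ : ∑ j ∈ s, (a * x j - β - y j) = 0)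
    (h₁ : ∑ j ∈ s, x j * (a * x j - β - y j) = 0)
    (hvar : (∑ j ∈ s, x j ^ 2) / #s - ((∑ j ∈ s, x j) / #s) ^ 2 ≠ 0) :
    a = ((∑ j ∈ s, x j * y j) / #s - (∑ j ∈ s, x j) / #s * ((∑ j ∈ s, y j) / #s))
      / ((∑ j ∈ s, x j ^ 2) / #s - ((∑ j ∈ s, x j) / #s) ^ 2) := by
  have hN : (#s : ℝ) ≠ 0 := by
    rintro h
    simp [h] at hvar
  have e₀ : ∑ j ∈ s, (a * x j - β - y j) = a * ∑ j ∈ s, x j - #s * β - ∑ j ∈ s, y j := by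
    simp only [sum_sub_distrib, mul_sum, sum_const, nsmul_eq_mul]
  have e₁ : ∑ j ∈ s, x j * (a * x j - β - y j)
      = a * ∑ j ∈ s, x j ^ 2 - β * ∑ j ∈ s, x j - ∑ j ∈ s, x j * y j := by
    simp only [mul_sum, ← sum_sub_distrib]
    exact sum_congr rfl fun j _ => by ring
  rw [e₀] at h₀
  rw [e₁] at h₁
  rw [eq_div_iff hvar]
  field_simp
  linear_combination (#s : ℝ) * h₁ - (∑ j ∈ s, x j) * h₀

end LeastSquares

section ReLUNetwork

theorem sum_filter_lt_mul_eq_zero {ι : Type*} (s : Finset ι) (x r : ι → ℝ) (β : ℝ)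
    (h₀ : ∑ j ∈ s with β < x j, r j = 0)
    (h₁ : ∑ j ∈ s, max (x j - β) 0 * r j = 0) :
    ∑ j ∈ s with β < x j, x j * r j = 0 := by
  have hramp : ∑ j ∈ s with β < x j, (x j - β) * r j = 0 := by
    rw [← h₁, sum_filter]
    refine sum_congr rfl fun j _ => ?_
    split_ifs with h
    · rw [max_eq_left (sub_pos.mpr h).le]
    · rw [max_eq_right (sub_nonpos.mpr (not_lt.mp h)), zero_mul]
  calc ∑ j ∈ s with β < x j, x j * r j
      = ∑ j ∈ s with β < x j, (x j - β) * r j + β * ∑ j ∈ s with β < x j, r j := by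
        rw [mul_sum, ← sum_add_distrib]
        exact sum_congr rfl fun j _ => by ring
    _ = 0 := by rw [hramp, h₀, mul_zero, add_zero]

variable {m n : ℕ} (x : Fin m → ℝ) (b : Fin n → ℝ)

noncomputable def cell (k : Fin n) : Finset (Fin m) :=
  univ.filter fun j => b k < x j ∧ ∀ h : (k : ℕ) + 1 < n, x j ≤ b ⟨(k : ℕ) + 1, h⟩

variable {x b}

theorem sum_cell_eq_zero (hb : Monotone b) (k : Fin n) {g : Fin m → ℝ}
    (hg : ∀ i, ∑ j with b i < x j, g j = 0) : ∑ j ∈ cell x b k, g j = 0 := by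
  by_cases hk : (k : ℕ) + 1 < n
  · set k' : Fin n := ⟨(k : ℕ) + 1, hk⟩
    have hsub : univ.filter (b k' < x ·) ⊆ univ.filter (b k < x ·) := fun j hj => by
      simp only [mem_filter, mem_univ, true_and] at hj ⊢
      exact (hb (Fin.le_def.mpr (Nat.le_succ _))).trans_lt hj
    have hcell : cell x b k = univ.filter (b k < x ·) \ univ.filter (b k' < x ·) := by
      ext j
      simp [cell, hk, k']
    rw [hcell, sum_sdiff_eq_sub hsub, hg, hg, sub_zero]
  · have hcell : cell x b k = univ.filter (b k < x ·) := by
      ext j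
      simp [cell, hk]
    rw [hcell, hg]

theorem sum_mul_max_sub_eq_of_mem_cell (hb : Monotone b) (c : Fin n → ℝ) {k : Fin n} {t : ℝ}
    (hlo : b k < t) (hhi : ∀ h : (k : ℕ) + 1 < n, t ≤ b ⟨(k : ℕ) + 1, h⟩) :
    ∑ i, c i * max (t - b i) 0 = (∑ i with i ≤ k, c i) * t - ∑ i with i ≤ k, c i * b i := by
  rw [← sum_filter_add_sum_filter_not univ (· ≤ k)]
  have hright : ∑ i with ¬ i ≤ k, c i * max (t - b i) 0 = 0 := by
    refine sum_eq_zero fun i hi => ?_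
    have hki : (k : ℕ) + 1 ≤ i := Fin.lt_def.mp (not_le.mp (mem_filter.mp hi).2)
    have : t ≤ b i := (hhi (hki.trans_lt i.isLt)).trans (hb (Fin.le_def.mpr hki))
    rw [max_eq_right (sub_nonpos.mpr this), mul_zero]
  have hleft : ∀ i ∈ univ.filter (· ≤ k), c i * max (t - b i) 0 = c i * t - c i * b i := by
    intro i hi
    rw [max_eq_left (sub_nonneg.mpr ((hb (mem_filter.mp hi).2).trans hlo.le)), mul_sub]
  rw [hright, add_zero, sum_congr rfl hleft, sum_sub_distrib, sum_mul]

end ReLUNetwork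

/-- at a stationary point, the slope of the network on each cell
with at least two data points equals the least-squares slope of the data in
that cell. -/
theorem stationarity_slope_leastSquares
    (m n : ℕ) (x y : Fin m → ℝ) (hx : StrictMono x)
    (b : Fin n → ℝ) (hb : Monotone b)
    (c : Fin n → ℝ)
    (f : ℝ → ℝ) (hf : ∀ t, f t = ∑ i, c i * max (t - b i) 0)
    (inCell : Fin n → Fin m → Prop)
    (hinCell : ∀ k j, inCell k j ↔
      (b k < x j ∧ ∀ h : (k : ℕ) + 1 < n, x j ≤ b ⟨(k : ℕ) + 1, h⟩))
    (u : Fin n → ℕ)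
    (hu : ∀ k, u k = (Finset.univ.filter (fun j => inCell k j)).card)
    (μ ybar σsq : Fin n → ℝ)
    (hμ : ∀ k, μ k =
      (∑ j ∈ Finset.univ.filter (fun j => inCell k j), x j) / (u k : ℝ))
    (hybar : ∀ k, ybar k =
      (∑ j ∈ Finset.univ.filter (fun j => inCell k j), y j) / (u k : ℝ))
    (hσsq : ∀ k, σsq k =
      (∑ j ∈ Finset.univ.filter (fun j => inCell k j), (x j) ^ 2) / (u k : ℝ) - (μ k) ^ 2)
    (hstat_b : ∀ j : Fin n,
      ∑ k, (if b j < x k then (1 : ℝ) else 0) * (f (x k) - y k) = 0)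
    (hstat_c : ∀ j : Fin n,
      ∑ k, max (x k - b j) 0 * (f (x k) - y k) = 0) :
    ∀ k : Fin n, 2 ≤ u k →
      (∑ i ∈ Finset.univ.filter (fun i : Fin n => i ≤ k), c i) =
        ((∑ j ∈ Finset.univ.filter (fun j => inCell k j), x j * y j) / (u k : ℝ)
          - μ k * ybar k) / σsq k := by
  intro k hk
  have hcell : univ.filter (fun j => inCell k j) = cell x b k := by
    ext j
    simp [cell, hinCell]
  rw [hu, hcell] at hk
  rw [hσsq, hμ, hybar, hu, hcell]
  have hres₀ (i : Fin n) : ∑ j with b i < x j, (f (x j) - y j) = 0 := by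
    simpa only [sum_filter, ite_mul, one_mul, zero_mul] using hstat_b i
  have hres₁ (i : Fin n) : ∑ j with b i < x j, x j * (f (x j) - y j) = 0 :=
    sum_filter_lt_mul_eq_zero _ x _ (b i) (hres₀ i) (hstat_c i)
  have haffine : ∀ j ∈ cell x b k, f (x j) - y j
      = (∑ i with i ≤ k, c i) * x j - (∑ i with i ≤ k, c i * b i) - y j := by
    intro j hj
    obtain ⟨hlo, hhi⟩ := (mem_filter.mp hj).2
    rw [hf, sum_mul_max_sub_eq_of_mem_cell hb c hlo hhi]
  apply slope_eq_of_normal_equations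
  · rw [← sum_congr rfl haffine]
    exact sum_cell_eq_zero hb k hres₀
  · rw [← sum_congr rfl fun j hj => congrArg (x j * ·) (haffine j hj)]
    exact sum_cell_eq_zero hb k hres₁
  · exact (sum_sq_div_card_sub_sq_pos _ x hk hx.injective.injOn).ne'
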